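/- For γ > 0 and t > (1+√γ)², define A_t = t - γ - 1 and B_t = √((t-γ-1)² - 4γ). Then the function F(t) = (1/(2γ))[(A_t - B_t) - (γ+1) log(A_t - B_t) + (γ-1) log((γ+1)A_t - (γ-1)B_t + 4γ)] satisfies F'(t) = (t + γ - 1 - √((t-γ-1)²-4γ)) / (2γt) for all t > (1+√γ)². -/

import Mathlib

/-!
Write `A = t - γ - 1`, `B = √(A² - 4γ)` and `u = A - B`, so that `u (A + B) = 4γ`. In terms
of `u` the argument of the second logarithm is `γ (u + 2)² / u`, hence, up to an additive
constant, `2γ F = u - 2γ log u + 2(γ - 1) log (u + 2)`. Since `du/dt = -u/B`, the chain rule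
gives `F' = u / (γ (u + 2))`, which is the claimed expression once `B² = A² - 4γ` is used.
-/

open Real

section

variable {c x : ℝ}

theorem sub_sqrt_sq_sub_mul_add_sqrt (h : c ≤ x ^ 2) :
    (x - √(x ^ 2 - c)) * (x + √(x ^ 2 - c)) = c := by
  have hsq : √(x ^ 2 - c) ^ 2 = x ^ 2 - c := sq_sqrt (by linarith)
  linear_combination -hsq

theorem sub_sqrt_sq_sub_pos (hc : 0 < c) (hx : 0 < x) : 0 < x - √(x ^ 2 - c) := by
  have : √(x ^ 2 - c) < x := (sqrt_lt' hx).2 (by linarith)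
  linarith

theorem hasDerivAt_sub_sqrt_sq_sub (h : c < x ^ 2) :
    HasDerivAt (fun y => y - √(y ^ 2 - c)) (-(x - √(x ^ 2 - c)) / √(x ^ 2 - c)) x := by
  have hB : √(x ^ 2 - c) ≠ 0 := (sqrt_pos.2 (by linarith)).ne'
  refine ((hasDerivAt_id' (x := x)).fun_sub
    (((hasDerivAt_pow 2 x).sub_const c).sqrt (by linarith))).congr_deriv ?_
  field_simp
  ring

end

/-- `F(t) = mpLogPotential γ (t - γ - 1)`. -/
noncomputable def mpLogPotential (γ x : ℝ) : ℝ :=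
  (1 / (2 * γ)) *
    ((x - √(x ^ 2 - 4 * γ)) - (γ + 1) * log (x - √(x ^ 2 - 4 * γ))
      + (γ - 1) * log ((γ + 1) * x - (γ - 1) * √(x ^ 2 - 4 * γ) + 4 * γ))

noncomputable def mpReducedPotential (γ u : ℝ) : ℝ :=
  u - 2 * γ * log u + 2 * (γ - 1) * log (u + 2)

section

variable {γ x u : ℝ}

theorem hasDerivAt_mpReducedPotential (hu : u ≠ 0) (hu2 : u + 2 ≠ 0) :
    HasDerivAt (mpReducedPotential γ) ((u ^ 2 - 4 * γ) / (u * (u + 2))) u := by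
  refine (((hasDerivAt_id' (x := u)).fun_sub ((hasDerivAt_log hu).const_mul (2 * γ))).fun_add
    ((((hasDerivAt_id' (x := u)).add_const 2).log hu2).const_mul (2 * (γ - 1)))).congr_deriv ?_
  field_simp
  ring

theorem mpLogPotential_log_arg_eq (hγ : γ ≠ 0) (h : 4 * γ ≤ x ^ 2) :
    (γ + 1) * x - (γ - 1) * √(x ^ 2 - 4 * γ) + 4 * γ
      = γ * (x - √(x ^ 2 - 4 * γ) + 2) ^ 2 / (x - √(x ^ 2 - 4 * γ)) := by
  have hprod := sub_sqrt_sq_sub_mul_add_sqrt h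
  have hu : x - √(x ^ 2 - 4 * γ) ≠ 0 := by
    intro hu
    rw [hu, zero_mul] at hprod
    exact hγ (by linarith)
  rw [eq_div_iff hu]
  linear_combination hprod

theorem four_mul_lt_sq_of_two_mul_sqrt_lt (hγ : 0 ≤ γ) (hx : 2 * √γ < x) :
    4 * γ < x ^ 2 := by
  nlinarith [sq_sqrt hγ, sqrt_nonneg γ]

theorem mpLogPotential_eq (hγ : 0 < γ) (hx : 2 * √γ < x) :
    mpLogPotential γ x =
      (mpReducedPotential γ (x - √(x ^ 2 - 4 * γ)) + (γ - 1) * log γ) / (2 * γ) := by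
  have hx2 := four_mul_lt_sq_of_two_mul_sqrt_lt hγ.le hx
  have hx0 : 0 < x := (by positivity : 0 ≤ 2 * √γ).trans_lt hx
  have hu := sub_sqrt_sq_sub_pos (c := 4 * γ) (by positivity) hx0
  rw [mpLogPotential, mpReducedPotential, mpLogPotential_log_arg_eq hγ.ne' hx2.le,
    log_div (by positivity) hu.ne', log_mul hγ.ne' (by positivity), log_pow]
  push_cast
  ring

theorem hasDerivAt_mpLogPotential (hγ : 0 < γ) (hx : 2 * √γ < x) :
    HasDerivAt (mpLogPotential γ)
      ((x + 2 * γ - √(x ^ 2 - 4 * γ)) / (2 * γ * (x + γ + 1))) x := by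
  have hx2 := four_mul_lt_sq_of_two_mul_sqrt_lt hγ.le hx
  have hx0 : 0 < x := (by positivity : 0 ≤ 2 * √γ).trans_lt hx
  have hu := sub_sqrt_sq_sub_pos (c := 4 * γ) (by positivity) hx0
  have hB : √(x ^ 2 - 4 * γ) ^ 2 = x ^ 2 - 4 * γ := sq_sqrt (by linarith)
  have hB0 : √(x ^ 2 - 4 * γ) ≠ 0 := (sqrt_pos.2 (by linarith)).ne'
  have hreduced := (((hasDerivAt_mpReducedPotential (γ := γ) hu.ne' (by linarith)).comp x
    (hasDerivAt_sub_sqrt_sq_sub hx2)).add_const ((γ - 1) * log γ)).div_const (2 * γ)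
  refine (hreduced.congr_of_eventuallyEq ?_).congr_deriv ?_
  · filter_upwards [Ioi_mem_nhds hx] with y hy using mpLogPotential_eq hγ hy
  · generalize √(x ^ 2 - 4 * γ) = B at *
    field_simp
    linear_combination (x + γ + 1 - B) * hB

end

/-- The antiderivative formula for the Hilbert transform of the Marchenko–Pastur law:
F'(t) = (t + γ - 1 - √((t-γ-1)² - 4γ)) / (2γt) for t > (1+√γ)². -/
theorem hasDerivAt_MP_log_potential (γ : ℝ) (hγ : 0 < γ)
    (t : ℝ) (ht : (1 + Real.sqrt γ) ^ 2 < t) :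
    HasDerivAt
      (fun s : ℝ =>
        (1 / (2 * γ)) *
          (((s - γ - 1) - Real.sqrt ((s - γ - 1) ^ 2 - 4 * γ))
            - (γ + 1) * Real.log ((s - γ - 1) - Real.sqrt ((s - γ - 1) ^ 2 - 4 * γ))
            + (γ - 1) * Real.log
                ((γ + 1) * (s - γ - 1) - (γ - 1) * Real.sqrt ((s - γ - 1) ^ 2 - 4 * γ)
                  + 4 * γ)))
      ((t + γ - 1 - Real.sqrt ((t - γ - 1) ^ 2 - 4 * γ)) / (2 * γ * t)) t := by
  have hx : 2 * √γ < t - γ - 1 := by nlinarith [sq_sqrt hγ.le]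
  refine ((hasDerivAt_mpLogPotential hγ hx).comp t
    (((hasDerivAt_id' (x := t)).sub_const γ).sub_const 1)).congr_deriv ?_
  rw [mul_one]
  congr 1 <;> ring
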